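/- Suppose Assumption H4 holds and define φ(x) = ∫₀^x ds/σ(s). Then φ is smooth and for every n ≥ 1 there exists a constant K_n ≥ 0 such that |φ^{(n)}(x)| ≤ K_n |x|^{−(n−1+γ/2)} for all |x| ≥ 1. -/

import Mathlib

noncomputable section
open Set Filter

/-- Assumption H4 on the diffusion coefficient: `σ` is smooth, positive, with bounded
derivatives; `σ = σ₀ σ_b` with `σ₀(q) = |q|^{γ/2}` for `|q| ≥ 1`, `0 ≤ γ ≤ 1/2`, and
`σ_b` smooth and bounded with bounded derivatives, `0 < δ₋ ≤ σ_b ≤ δ₊`; moreover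
`|σ^{(n)}(q)| ≤ S_n |q|^{γ/2 - n}` for `|q| ≥ 1`, for every `n ≥ 1`. -/
def HypH4 (σ σ0 σb : ℝ → ℝ) (γ δm δp : ℝ) : Prop :=
  ContDiff ℝ (⊤ : ℕ∞) σ ∧ (∀ q, 0 < σ q) ∧
  (∀ n : ℕ, 1 ≤ n → ∃ C : ℝ, ∀ q, |iteratedDeriv n σ q| ≤ C) ∧
  (∀ q, σ q = σ0 q * σb q) ∧
  0 ≤ γ ∧ γ ≤ 1 / 2 ∧
  (∀ q : ℝ, 1 ≤ |q| → σ0 q = |q| ^ (γ / 2)) ∧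
  ContDiff ℝ (⊤ : ℕ∞) σb ∧
  (∀ n : ℕ, 1 ≤ n → ∃ C : ℝ, ∀ q, |iteratedDeriv n σb q| ≤ C) ∧
  0 < δm ∧ (∀ q, δm ≤ σb q ∧ σb q ≤ δp) ∧
  (∀ n : ℕ, 1 ≤ n → ∃ S : ℝ,
    ∀ q : ℝ, 1 ≤ |q| → |iteratedDeriv n σ q| ≤ S * |q| ^ (γ / 2 - (n : ℝ)))

/-- Assumption H5 on the initial condition: `𝔠₀` is smooth and bounded and
`‖𝔠₀^{(n)} σ₀^n‖_{C⁰} ≤ R_n` for every `n ≥ 1`. -/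
def HypH5 (c0 σ0 : ℝ → ℝ) : Prop :=
  ContDiff ℝ (⊤ : ℕ∞) c0 ∧ (∃ C : ℝ, ∀ q, |c0 q| ≤ C) ∧
  ∀ n : ℕ, 1 ≤ n → ∃ R : ℝ, ∀ q, |iteratedDeriv n c0 q| * |σ0 q| ^ n ≤ R

/-- `c` is a classical solution of the Cauchy problem
`∂_t 𝔠 = (1/2) σ(q)² ∂²_q 𝔠`, `𝔠(0, ·) = 𝔠₀`, on `ℝ₊ × ℝ`. -/
def IsDiffSolution (σ c0 : ℝ → ℝ) (c : ℝ → ℝ → ℝ) : Prop :=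
  (∀ q, c 0 q = c0 q) ∧
  (∀ t ∈ Ici (0 : ℝ), ContDiff ℝ 2 (fun q => c t q)) ∧
  ContinuousOn (fun p : ℝ × ℝ => c p.1 p.2) (Ici 0 ×ˢ univ) ∧
  ∀ t ∈ Ici (0 : ℝ), ∀ q : ℝ,
    HasDerivWithinAt (fun s => c s q)
      ((1 / 2) * (σ q) ^ 2 * iteratedDeriv 2 (fun x => c t x) q) (Ici 0) t

/-- The Lamperti change of variable `φ(x) = ∫₀^x ds/σ(s)`. -/
def lamperti (σ : ℝ → ℝ) : ℝ → ℝ := fun x => ∫ s in (0 : ℝ)..x, 1 / σ s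


open scoped NNReal ENNReal ContDiff

section AuxLemmas

open intervalIntegral

/-- Leibniz-type bound for products with power-type bounds on derivatives. -/
lemma mul_iterated_bound {u v : ℝ → ℝ} (hu : ContDiff ℝ (⊤ : ℕ∞) u) (hv : ContDiff ℝ (⊤ : ℕ∞) v)
    {a b Cu Cv : ℝ} (hCu : 0 ≤ Cu) (hCv : 0 ≤ Cv) {m : ℕ} {x : ℝ} (hx : 1 ≤ |x|)
    (hub : ∀ j, j ≤ m → |iteratedDeriv j u x| ≤ Cu * |x| ^ (a - (j:ℝ)))
    (hvb : ∀ j, j ≤ m → |iteratedDeriv j v x| ≤ Cv * |x| ^ (b - (j:ℝ))) :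
    |iteratedDeriv m (fun y => u y * v y) x| ≤ 2 ^ m * (Cu * Cv) * |x| ^ (a + b - (m:ℝ)) := by
  have hx0 : (0:ℝ) < |x| := lt_of_lt_of_le one_pos hx
  have h0 : |iteratedDeriv m (fun y => u y * v y) x|
      = ‖iteratedFDeriv ℝ m (fun y => u y * v y) x‖ := by
    rw [norm_iteratedFDeriv_eq_norm_iteratedDeriv, Real.norm_eq_abs]
  rw [h0]
  refine (norm_iteratedFDeriv_mul_le hu hv x (by exact_mod_cast le_top)).trans ?_
  have hterm : ∀ i ∈ Finset.range (m+1),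
      (m.choose i : ℝ) * ‖iteratedFDeriv ℝ i u x‖ * ‖iteratedFDeriv ℝ (m - i) v x‖
        ≤ (m.choose i : ℝ) * (Cu * Cv * |x| ^ (a + b - (m:ℝ))) := by
    intro i hi
    have him : i ≤ m := Nat.lt_succ_iff.mp (Finset.mem_range.mp hi)
    have h1 : ‖iteratedFDeriv ℝ i u x‖ ≤ Cu * |x| ^ (a - (i:ℝ)) := by
      rw [norm_iteratedFDeriv_eq_norm_iteratedDeriv, Real.norm_eq_abs]; exact hub i him
    have h2 : ‖iteratedFDeriv ℝ (m - i) v x‖ ≤ Cv * |x| ^ (b - ((m - i : ℕ):ℝ)) := by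
      rw [norm_iteratedFDeriv_eq_norm_iteratedDeriv, Real.norm_eq_abs]
      exact hvb _ (Nat.sub_le m i)
    have h3 : (m.choose i : ℝ) * ‖iteratedFDeriv ℝ i u x‖ * ‖iteratedFDeriv ℝ (m-i) v x‖
        ≤ (m.choose i : ℝ) * (Cu * |x| ^ (a - (i:ℝ))) * (Cv * |x| ^ (b - ((m - i:ℕ):ℝ))) := by
      have n1 : (0:ℝ) ≤ (m.choose i : ℝ) := Nat.cast_nonneg _
      have n2 : (0:ℝ) ≤ Cu * |x| ^ (a - (i:ℝ)) :=
        mul_nonneg hCu (Real.rpow_nonneg (abs_nonneg x) _)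
      gcongr
    refine h3.trans (le_of_eq ?_)
    have hcast : ((m - i : ℕ) : ℝ) = (m:ℝ) - (i:ℝ) := by
      push_cast [Nat.cast_sub him]; ring
    rw [hcast]
    have hpow : |x| ^ (a - (i:ℝ)) * |x| ^ (b - ((m:ℝ) - (i:ℝ))) = |x| ^ (a + b - (m:ℝ)) := by
      rw [← Real.rpow_add hx0]; ring_nf
    calc (m.choose i : ℝ) * (Cu * |x| ^ (a - (i:ℝ))) * (Cv * |x| ^ (b - ((m:ℝ) - (i:ℝ))))
        = (m.choose i : ℝ) * (Cu * Cv * (|x| ^ (a - (i:ℝ)) * |x| ^ (b - ((m:ℝ) - (i:ℝ))))) := by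
          ring
      _ = (m.choose i : ℝ) * (Cu * Cv * |x| ^ (a + b - (m:ℝ))) := by rw [hpow]
  refine (Finset.sum_le_sum hterm).trans (le_of_eq ?_)
  rw [← Finset.sum_mul]
  have hbin : ∑ i ∈ Finset.range (m+1), (m.choose i : ℝ) = 2^m := by
    rw [← Nat.cast_sum, Nat.sum_range_choose]
    push_cast
    ring
  rw [hbin]
  ring

end AuxLemmas

/-- Under H4, `φ(x) = ∫₀^x ds/σ(s)` is smooth and for every `n ≥ 1` there is
`K_n ≥ 0` with `|φ^{(n)}(x)| ≤ K_n |x|^{-(n-1+γ/2)}` for all `|x| ≥ 1`. -/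
theorem stmt17 (σ σ0 σb : ℝ → ℝ) (γ δm δp : ℝ) (h4 : HypH4 σ σ0 σb γ δm δp) :
    ContDiff ℝ (⊤ : ℕ∞) (lamperti σ) ∧
    ∀ n : ℕ, 1 ≤ n → ∃ K : ℝ, 0 ≤ K ∧
      ∀ x : ℝ, 1 ≤ |x| →
        |iteratedDeriv n (lamperti σ) x| ≤ K * |x| ^ (-((n : ℝ) - 1 + γ / 2)) := by
  obtain ⟨hσs, hσpos, -, hfact, hγ0, -, hσ0, -, -, hδm, hσbb, hS⟩ := h4
  have hσne : ∀ x, σ x ≠ 0 := fun x => (hσpos x).ne'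
  set g : ℝ → ℝ := fun x => (σ x)⁻¹ with hgdef
  have hg : ContDiff ℝ (⊤ : ℕ∞) g := hσs.inv hσne
  have hgc : Continuous g := hg.continuous
  have hphi : ∀ x, lamperti σ x = ∫ s in (0:ℝ)..x, g s := by
    intro x
    simp only [lamperti, one_div, hgdef]
  have hderiv : ∀ x, HasDerivAt (lamperti σ) (g x) x := by
    intro x
    have hle : lamperti σ = fun u => ∫ s in (0:ℝ)..u, g s := funext hphi
    rw [hle]
    exact (hgc.integral_hasStrictDerivAt 0 x).hasDerivAt
  have hld : deriv (lamperti σ) = g := funext fun x => (hderiv x).deriv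
  have hsmooth : ContDiff ℝ (⊤ : ℕ∞) (lamperti σ) := by
    exact contDiff_infty_iff_deriv.mpr ⟨fun x => (hderiv x).differentiableAt, hld ▸ hg⟩
  -- derivative of g
  have hgd : deriv g = fun x => (-(deriv σ x)) * (g x * g x) := by
    funext x
    have h1 : HasDerivAt σ (deriv σ x) x :=
      ((hσs.differentiable (by simp)) x).hasDerivAt
    have h2 : HasDerivAt (fun y => (σ y)⁻¹) _ x := h1.inv (hσne x)
    show deriv (fun y => (σ y)⁻¹) x = _
    rw [h2.deriv]
    simp only [hgdef]
    rw [div_eq_mul_inv, pow_two, mul_inv]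
  have hσd : ContDiff ℝ (⊤ : ℕ∞) (deriv σ) := by
    have h := contDiff_infty_iff_deriv.mp hσs
    exact h.2
  -- base bound on g
  have hgb0 : ∀ x : ℝ, 1 ≤ |x| → |g x| ≤ δm⁻¹ * |x| ^ (-(γ/2)) := by
    intro x hx
    have hx0 : (0:ℝ) < |x| := lt_of_lt_of_le one_pos hx
    have hpow : (0:ℝ) < |x| ^ (γ/2) := Real.rpow_pos_of_pos hx0 _
    have hlow : |x| ^ (γ/2) * δm ≤ σ x := by
      rw [hfact x, hσ0 x hx]
      exact mul_le_mul_of_nonneg_left (hσbb x).1 hpow.le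
    have hpos' : 0 < |x| ^ (γ/2) * δm := mul_pos hpow hδm
    have hinv : (σ x)⁻¹ ≤ (|x| ^ (γ/2) * δm)⁻¹ := inv_anti₀ hpos' hlow
    calc |g x| = (σ x)⁻¹ := abs_of_pos (inv_pos.mpr (hσpos x))
      _ ≤ (|x| ^ (γ/2) * δm)⁻¹ := hinv
      _ = δm⁻¹ * |x| ^ (-(γ/2)) := by
          rw [mul_inv, Real.rpow_neg hx0.le]; ring
  -- constants for derivatives of σ
  have hS' : ∀ n : ℕ, ∃ S : ℝ, 0 ≤ S ∧ ∀ q : ℝ, 1 ≤ |q| →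
      |iteratedDeriv (n+1) σ q| ≤ S * |q| ^ ((γ/2 - 1) - (n:ℝ)) := by
    intro n
    obtain ⟨S, hSb⟩ := hS (n+1) (Nat.le_add_left 1 n)
    refine ⟨max S 0, le_max_right _ _, fun q hq => ?_⟩
    have h1 := hSb q hq
    have hexp : γ/2 - ((n+1 : ℕ):ℝ) = (γ/2 - 1) - (n:ℝ) := by push_cast; ring
    rw [hexp] at h1
    exact h1.trans (mul_le_mul_of_nonneg_right (le_max_left _ _)
      (Real.rpow_nonneg (abs_nonneg q) _))
  choose S hS0 hSb using hS'
  -- main inductive bound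
  have key : ∀ m : ℕ, ∃ K : ℝ, 0 ≤ K ∧ ∀ j, j ≤ m → ∀ x : ℝ, 1 ≤ |x| →
      |iteratedDeriv j g x| ≤ K * |x| ^ (-(γ/2) - (j:ℝ)) := by
    intro m
    induction m with
    | zero =>
      refine ⟨δm⁻¹, inv_nonneg.mpr hδm.le, ?_⟩
      intro j hj x hx
      interval_cases j
      simpa [iteratedDeriv_zero] using hgb0 x hx
    | succ m ih =>
      obtain ⟨K, hK0, hK⟩ := ih
      set SM := ∑ i ∈ Finset.range (m+1), S i with hSM
      have hSM0 : 0 ≤ SM := Finset.sum_nonneg fun i _ => hS0 i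
      have hSle : ∀ j, j ≤ m → S j ≤ SM := fun j hj =>
        Finset.single_le_sum (fun i _ => hS0 i) (Finset.mem_range.mpr (Nat.lt_succ_of_le hj))
      have hu : ∀ j, j ≤ m → ∀ x : ℝ, 1 ≤ |x| →
          |iteratedDeriv j (fun y => -(deriv σ y)) x| ≤ SM * |x| ^ ((γ/2 - 1) - (j:ℝ)) := by
        intro j hj x hx
        have he : iteratedDeriv j (fun y => -(deriv σ y)) x = -(iteratedDeriv (j+1) σ x) := by
          rw [iteratedDeriv_succ', iteratedDeriv_fun_neg]
        rw [he, abs_neg]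
        exact (hSb j x hx).trans (mul_le_mul_of_nonneg_right (hSle j hj)
          (Real.rpow_nonneg (abs_nonneg x) _))
      have hvb : ∀ j, j ≤ m → ∀ x : ℝ, 1 ≤ |x| →
          |iteratedDeriv j (fun y => g y * g y) x| ≤ (2^m * (K*K)) * |x| ^ ((-γ) - (j:ℝ)) := by
        intro j hj x hx
        have hb := mul_iterated_bound hg hg hK0 hK0 hx
          (fun i hi => hK i (hi.trans hj) x hx) (fun i hi => hK i (hi.trans hj) x hx)
        have hexp : (-(γ/2)) + (-(γ/2)) - (j:ℝ) = -γ - (j:ℝ) := by ring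
        rw [hexp] at hb
        refine hb.trans ?_
        have h2 : (2:ℝ)^j ≤ 2^m := pow_le_pow_right₀ one_le_two hj
        exact mul_le_mul_of_nonneg_right
          (mul_le_mul_of_nonneg_right h2 (mul_nonneg hK0 hK0))
          (Real.rpow_nonneg (abs_nonneg x) _)
      have hKv0 : (0:ℝ) ≤ 2^m * (K*K) := by positivity
      have hnew : ∀ x : ℝ, 1 ≤ |x| →
          |iteratedDeriv (m+1) g x|
            ≤ (2^m * (SM * (2^m*(K*K)))) * |x| ^ (-(γ/2) - ((m+1:ℕ):ℝ)) := by
        intro x hx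
        have heq : iteratedDeriv (m+1) g x
            = iteratedDeriv m (fun y => (-(deriv σ y)) * (g y * g y)) x := by
          rw [iteratedDeriv_succ', hgd]
        rw [heq]
        have hb := mul_iterated_bound (hσd.neg) (hg.mul hg) hSM0 hKv0 hx
          (fun j hj => hu j hj x hx) (fun j hj => hvb j hj x hx)
        refine hb.trans (le_of_eq ?_)
        congr 1
        push_cast
        ring
      refine ⟨max K (2^m*(SM*(2^m*(K*K)))), le_trans hK0 (le_max_left _ _), ?_⟩
      intro j hj x hx
      by_cases hjm : j ≤ m
      · exact (hK j hjm x hx).trans (mul_le_mul_of_nonneg_right (le_max_left _ _)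
          (Real.rpow_nonneg (abs_nonneg x) _))
      · have hje : j = m+1 := by omega
        subst hje
        exact (hnew x hx).trans (mul_le_mul_of_nonneg_right (le_max_right _ _)
          (Real.rpow_nonneg (abs_nonneg x) _))
  refine ⟨hsmooth, fun n hn => ?_⟩
  obtain ⟨m, rfl⟩ : ∃ m, n = m + 1 := ⟨n-1, by omega⟩
  obtain ⟨K, hK0, hK⟩ := key m
  refine ⟨K, hK0, fun x hx => ?_⟩
  have heq : iteratedDeriv (m+1) (lamperti σ) x = iteratedDeriv m g x := by
    rw [iteratedDeriv_succ', hld]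
  rw [heq]
  refine (hK m le_rfl x hx).trans (le_of_eq ?_)
  congr 1
  push_cast
  ring
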